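/- Union-bound estimate for repeat-free arrays: for n, d ≥ 1 and ℓ ≥ 1 with ℓ ≤ n, the number of arrays A : (Fin n)^d → Σ that contain two identical ℓ×⋯×ℓ sub-arrays at distinct positions is at most (n − ℓ + 1)^{2d} · 2^{n^d − ℓ^d}. Consequently, if ℓ^d ≥ 2d·log₂ n + 1 and (n−ℓ+1)^{2d}·2^{−ℓ^d} < 1/2, then at least half of all arrays are repeat-free. -/
import Mathlib


open Finset

/-- Binary `d`-dimensional arrays of size `n^d`. -/
abbrev Arr (n d : ℕ) := (Fin d → Fin n) → Bool

/-- Extension of an array to arbitrary natural indices (`false` off the grid). -/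
def extA (n d : ℕ) (A : Arr n d) (J : Fin d → ℕ) : Bool :=
  if h : ∀ j, J j < n then A (fun j => ⟨J j, h j⟩) else false

/-- A starting position `I` is valid for sub-array size `ℓ`. -/
def validPos (n d : ℕ) (ℓ I : Fin d → ℕ) : Prop := ∀ j, I j + ℓ j ≤ n

/-- The size-`ℓ` sub-arrays of `A` at `I₁` and `I₂` coincide. -/
def subEq (n d : ℕ) (ℓ : Fin d → ℕ) (A : Arr n d) (I₁ I₂ : Fin d → ℕ) : Prop :=
  ∀ a : Fin d → ℕ, (∀ j, a j < ℓ j) →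
    extA n d A (fun j => I₁ j + a j) = extA n d A (fun j => I₂ j + a j)

/-- The repeat-free constraint `C_RF(n,d,𝐝)`. -/
def CRF (n d : ℕ) (ℓ : Fin d → ℕ) : Set (Arr n d) :=
  {A | ∀ I₁ I₂, validPos n d ℓ I₁ → validPos n d ℓ I₂ → I₁ ≠ I₂ → ¬ subEq n d ℓ A I₁ I₂}

section Aux

variable {n d ℓ : ℕ}

lemma subEq_symm {L I₁ I₂ : Fin d → ℕ} {A : Arr n d} (h : subEq n d L A I₁ I₂) :
    subEq n d L A I₂ I₁ := fun a ha => (h a ha).symm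

/-- membership in the box at `I` -/
def inBox (ℓ : ℕ) (I : Fin d → ℕ) (x : Fin d → Fin n) : Prop :=
  ∀ j, I j ≤ (x j : ℕ) ∧ (x j : ℕ) < I j + ℓ

instance {I : Fin d → ℕ} : DecidablePred (inBox (n := n) ℓ I) := fun x => by
  unfold inBox; infer_instance

lemma extA_eq {A : Arr n d} {J : Fin d → ℕ} (h : ∀ j, J j < n) :
    extA n d A J = A (fun j => ⟨J j, h j⟩) := dif_pos h

/-- Overlap-recovery: two arrays with equal sub-arrays at `I₁, I₂` that agree
outside the box at `I₂` are equal. -/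
lemma key_inj {I₁ I₂ : Fin d → ℕ}
    (h₁ : validPos n d (fun _ => ℓ) I₁)
    {j₀ : Fin d} (hj : I₁ j₀ < I₂ j₀)
    {A B : Arr n d}
    (hA : subEq n d (fun _ => ℓ) A I₁ I₂) (hB : subEq n d (fun _ => ℓ) B I₁ I₂)
    (hout : ∀ x : Fin d → Fin n, ¬ inBox ℓ I₂ x → A x = B x) : A = B := by
  suffices H : ∀ m : ℕ, ∀ x : Fin d → Fin n, (x j₀ : ℕ) < m → A x = B x by
    funext x; exact H ((x j₀ : ℕ) + 1) x (Nat.lt_succ_self _)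
  intro m
  induction m with
  | zero => intro x hx; omega
  | succ m ih =>
    intro x hx
    by_cases hbox : inBox ℓ I₂ x
    · set a : Fin d → ℕ := fun j => (x j : ℕ) - I₂ j with ha
      have haℓ : ∀ j, a j < (fun _ : Fin d => ℓ) j := by
        intro j; have h1 := (hbox j).1; have h2 := (hbox j).2; simp only [ha]; omega
      have hy : ∀ j, I₁ j + a j < n := by
        intro j
        have h3 : a j < ℓ := haℓ j
        have h4 : I₁ j + ℓ ≤ n := h₁ j
        omega
      have hx2 : ∀ j, I₂ j + a j < n := by
        intro j; have h1 := (hbox j).1; have h2 := (x j).isLt; simp only [ha]; omega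
      have hIx : ∀ j, I₂ j + a j = (x j : ℕ) := by
        intro j; have h1 := (hbox j).1; simp only [ha]; omega
      set y : Fin d → Fin n := fun j => ⟨I₁ j + a j, hy j⟩ with hyd
      have e1 : ∀ C : Arr n d, extA n d C (fun j => I₂ j + a j) = C x := by
        intro C; rw [extA_eq hx2]; congr 1; funext j; exact Fin.ext (hIx j)
      have e2 : ∀ C : Arr n d, extA n d C (fun j => I₁ j + a j) = C y := by
        intro C; exact extA_eq hy
      have hylt : (y j₀ : ℕ) < m := by
        have : (y j₀ : ℕ) = I₁ j₀ + a j₀ := rfl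
        have hx0 := hIx j₀
        omega
      calc A x = A y := by rw [← e1 A, ← e2 A]; exact (hA a haℓ).symm
        _ = B y := ih y hylt
        _ = B x := by rw [← e1 B, ← e2 B]; exact hB a haℓ
    · exact hout x hbox

lemma card_box {I : Fin d → ℕ} (h : validPos n d (fun _ => ℓ) I) :
    Fintype.card {x : Fin d → Fin n // inBox ℓ I x} = ℓ ^ d := by
  have e : {x : Fin d → Fin n // inBox ℓ I x} ≃ (Fin d → Fin ℓ) :=
    { toFun := fun x j => ⟨(x.1 j : ℕ) - I j, by
        have h1 := (x.2 j).1; have h2 := (x.2 j).2; omega⟩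
      invFun := fun a => ⟨fun j => ⟨I j + (a j : ℕ), by
          have h3 : (a j : ℕ) < ℓ := (a j).isLt
          have h4 : I j + ℓ ≤ n := h j
          omega⟩,
        fun j => by constructor <;> simp <;> omega⟩
      left_inv := fun x => by
        apply Subtype.ext; funext j; apply Fin.ext
        have h1 := (x.2 j).1; simp; omega
      right_inv := fun a => by funext j; apply Fin.ext; simp }
  rw [Fintype.card_congr e]
  simp

/-- cardinality bound for the set of arrays with equal sub-arrays at a fixed
pair of positions, in the oriented case -/
lemma card_subEq_le_core {I₁ I₂ : Fin d → ℕ}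
    (h₁ : validPos n d (fun _ => ℓ) I₁) (h₂ : validPos n d (fun _ => ℓ) I₂)
    {j₀ : Fin d} (hj : I₁ j₀ < I₂ j₀) :
    Nat.card {A : Arr n d // subEq n d (fun _ => ℓ) A I₁ I₂} ≤ 2 ^ (n ^ d - ℓ ^ d) := by
  classical
  have hcard : Nat.card ({x : Fin d → Fin n // ¬ inBox ℓ I₂ x} → Bool)
      = 2 ^ (n ^ d - ℓ ^ d) := by
    rw [Nat.card_eq_fintype_card, Fintype.card_fun, Fintype.card_bool,
      Fintype.card_subtype_compl, card_box h₂]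
    congr 1
    simp [Fintype.card_fun]
  rw [← hcard]
  refine Nat.card_le_card_of_injective
    (fun A => fun z => A.1 z.1) ?_
  intro A B hAB
  apply Subtype.ext
  refine key_inj h₁ hj A.2 B.2 ?_
  intro x hx
  exact congrFun hAB ⟨x, hx⟩

lemma card_subEq_le {I₁ I₂ : Fin d → ℕ}
    (h₁ : validPos n d (fun _ => ℓ) I₁) (h₂ : validPos n d (fun _ => ℓ) I₂)
    (hne : I₁ ≠ I₂) :
    Nat.card {A : Arr n d // subEq n d (fun _ => ℓ) A I₁ I₂} ≤ 2 ^ (n ^ d - ℓ ^ d) := by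
  obtain ⟨j₀, hj₀⟩ := Function.ne_iff.mp hne
  rcases lt_or_gt_of_ne hj₀ with h | h
  · exact card_subEq_le_core h₁ h₂ h
  · have e : {A : Arr n d // subEq n d (fun _ => ℓ) A I₁ I₂}
        ≃ {A : Arr n d // subEq n d (fun _ => ℓ) A I₂ I₁} :=
      Equiv.subtypeEquivRight (fun A => ⟨subEq_symm, subEq_symm⟩)
    rw [Nat.card_congr e]
    exact card_subEq_le_core h₂ h₁ h

end Aux

/-- union-bound estimate for repeat-free arrays.  The number of
arrays with two identical `ℓ×⋯×ℓ` sub-arrays at distinct valid positions is at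
most `(n − ℓ + 1)^{2d}·2^{n^d − ℓ^d}`; consequently, if `ℓ^d ≥ 2d·log₂ n + 1` and
`(n−ℓ+1)^{2d}·2^{−ℓ^d} < 1/2`, then at least half of all arrays are repeat-free. -/
theorem stmt_11 (n d ℓ : ℕ) (hn : 1 ≤ n) (hd : 1 ≤ d) (hℓ : 1 ≤ ℓ) (hℓn : ℓ ≤ n) :
    Nat.card ↥((CRF n d (fun _ => ℓ))ᶜ) ≤ (n - ℓ + 1) ^ (2 * d) * 2 ^ (n ^ d - ℓ ^ d) ∧
    ((2 * (d : ℝ) * Real.logb 2 n + 1 ≤ (ℓ : ℝ) ^ d) →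
      (((n - ℓ + 1 : ℕ) : ℝ) ^ (2 * d) * (2 : ℝ) ^ (-((ℓ : ℝ) ^ d)) < 1 / 2) →
      2 ^ (n ^ d) ≤ 2 * Nat.card ↥(CRF n d (fun _ => ℓ))) := by
  classical
  set L : Fin d → ℕ := fun _ => ℓ with hL
  -- the finset of valid positions
  set P : Finset (Fin d → ℕ) := Fintype.piFinset (fun _ => Finset.range (n - ℓ + 1)) with hP
  have hPmem : ∀ I : Fin d → ℕ, validPos n d L I → I ∈ P := by
    intro I hI
    simp only [hP, Fintype.mem_piFinset, Finset.mem_range]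
    intro j; have := hI j; simp only [hL] at this; omega
  have hPvalid : ∀ I : Fin d → ℕ, I ∈ P → validPos n d L I := by
    intro I hI j
    simp only [hP, Fintype.mem_piFinset, Finset.mem_range] at hI
    have := hI j; simp only [hL]; omega
  have hPcard : P.card = (n - ℓ + 1) ^ d := by
    simp [hP, Fintype.card_piFinset]
  set Q : Finset ((Fin d → ℕ) × (Fin d → ℕ)) :=
    (P ×ˢ P).filter (fun p => p.1 ≠ p.2) with hQ
  set T : Finset (Arr n d) := Finset.univ.filter (fun A => A ∈ (CRF n d L)ᶜ) with hT
  have hTcard : Nat.card ↥((CRF n d L)ᶜ) = T.card := by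
    rw [Nat.card_eq_fintype_card]
    convert Fintype.card_subtype (p := fun A => A ∈ (CRF n d L)ᶜ) using 2
  have hsub : T ⊆ Q.biUnion (fun p => Finset.univ.filter (fun A => subEq n d L A p.1 p.2)) := by
    intro A hA
    simp only [hT, Finset.mem_filter, Finset.mem_univ, true_and, Set.mem_compl_iff, CRF,
      Set.mem_setOf_eq, not_forall] at hA
    obtain ⟨I₁, I₂, hv1, hv2, hne, hse⟩ := hA
    rw [not_not] at hse
    refine Finset.mem_biUnion.2 ⟨(I₁, I₂), ?_, ?_⟩
    · simp only [hQ, Finset.mem_filter, Finset.mem_product]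
      exact ⟨⟨hPmem _ hv1, hPmem _ hv2⟩, hne⟩
    · simp only [Finset.mem_filter, Finset.mem_univ, true_and]
      exact hse
  have hbound : ∀ p ∈ Q,
      (Finset.univ.filter (fun A => subEq n d L A p.1 p.2)).card ≤ 2 ^ (n ^ d - ℓ ^ d) := by
    intro p hp
    simp only [hQ, Finset.mem_filter, Finset.mem_product] at hp
    have h1 := hPvalid _ hp.1.1
    have h2 := hPvalid _ hp.1.2
    have := card_subEq_le (n := n) (d := d) (ℓ := ℓ) h1 h2 hp.2
    rwa [Nat.card_eq_fintype_card, Fintype.card_subtype] at this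
  have hQcard : Q.card ≤ (n - ℓ + 1) ^ (2 * d) := by
    calc Q.card ≤ (P ×ˢ P).card := Finset.card_filter_le _ _
      _ = (n - ℓ + 1) ^ d * (n - ℓ + 1) ^ d := by rw [Finset.card_product, hPcard]
      _ = (n - ℓ + 1) ^ (2 * d) := by rw [← pow_add]; ring_nf
  have main : Nat.card ↥((CRF n d L)ᶜ) ≤ (n - ℓ + 1) ^ (2 * d) * 2 ^ (n ^ d - ℓ ^ d) := by
    rw [hTcard]
    calc T.card ≤ (Q.biUnion (fun p => Finset.univ.filter (fun A => subEq n d L A p.1 p.2))).card :=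
        Finset.card_le_card hsub
      _ ≤ ∑ p ∈ Q, (Finset.univ.filter (fun A => subEq n d L A p.1 p.2)).card :=
        Finset.card_biUnion_le
      _ ≤ ∑ _p ∈ Q, 2 ^ (n ^ d - ℓ ^ d) := Finset.sum_le_sum hbound
      _ = Q.card * 2 ^ (n ^ d - ℓ ^ d) := by rw [Finset.sum_const, smul_eq_mul]
      _ ≤ (n - ℓ + 1) ^ (2 * d) * 2 ^ (n ^ d - ℓ ^ d) :=
        Nat.mul_le_mul_right _ hQcard
  refine ⟨main, ?_⟩
  intro _hlog hhalf
  -- arithmetic part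
  have hℓd : ℓ ^ d ≤ n ^ d := Nat.pow_le_pow_left hℓn d
  have htot : Nat.card ↥(CRF n d L) + Nat.card ↥((CRF n d L)ᶜ) = 2 ^ (n ^ d) := by
    have := Set.ncard_add_ncard_compl (CRF n d L)
    rw [Nat.card_coe_set_eq, Nat.card_coe_set_eq, this]
    rw [Nat.card_eq_fintype_card]
    simp [Fintype.card_fun]
  -- show 2 * Nat.card compl ≤ 2 ^ (n ^ d)
  have hreal : ((n - ℓ + 1 : ℕ) : ℝ) ^ (2 * d) * 2 ^ (n ^ d - ℓ ^ d) < 1 / 2 * 2 ^ (n ^ d) := by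
    have hpos : (0 : ℝ) < (2 : ℝ) ^ ((ℓ : ℝ) ^ d) := Real.rpow_pos_of_pos (by norm_num) _
    have h2 : ((n - ℓ + 1 : ℕ) : ℝ) ^ (2 * d) < 1 / 2 * 2 ^ ((ℓ : ℝ) ^ d) := by
      have := mul_lt_mul_of_pos_right hhalf hpos
      rwa [mul_assoc, ← Real.rpow_add (by norm_num), neg_add_cancel, Real.rpow_zero,
        mul_one] at this
    have hx : ((2 : ℝ) ^ ((ℓ : ℝ) ^ d)) * 2 ^ ((n ^ d - ℓ ^ d : ℕ) : ℝ) = 2 ^ ((n ^ d : ℕ) : ℝ) := by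
      rw [← Real.rpow_add (by norm_num)]
      congr 1
      push_cast
      rw [Nat.cast_sub hℓd]
      push_cast
      ring
    have h3 := mul_lt_mul_of_pos_right h2
      (show (0:ℝ) < 2 ^ ((n ^ d - ℓ ^ d : ℕ) : ℝ) from Real.rpow_pos_of_pos (by norm_num) _)
    rw [mul_assoc, hx] at h3
    calc ((n - ℓ + 1 : ℕ) : ℝ) ^ (2 * d) * 2 ^ (n ^ d - ℓ ^ d)
        = ((n - ℓ + 1 : ℕ) : ℝ) ^ (2 * d) * 2 ^ ((n ^ d - ℓ ^ d : ℕ) : ℝ) := by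
          rw [Real.rpow_natCast]
      _ < 1 / 2 * 2 ^ ((n ^ d : ℕ) : ℝ) := h3
      _ = 1 / 2 * 2 ^ (n ^ d) := by rw [Real.rpow_natCast]
  have hcompl : 2 * Nat.card ↥((CRF n d L)ᶜ) ≤ 2 ^ (n ^ d) := by
    have h1 : (Nat.card ↥((CRF n d L)ᶜ) : ℝ) ≤
        ((n - ℓ + 1 : ℕ) : ℝ) ^ (2 * d) * 2 ^ (n ^ d - ℓ ^ d) := by
      have := main
      have : ((Nat.card ↥((CRF n d L)ᶜ) : ℕ) : ℝ)
          ≤ (((n - ℓ + 1) ^ (2 * d) * 2 ^ (n ^ d - ℓ ^ d) : ℕ) : ℝ) := Nat.cast_le.mpr this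
      push_cast at this ⊢
      exact this
    have h2 : (Nat.card ↥((CRF n d L)ᶜ) : ℝ) < 1 / 2 * 2 ^ (n ^ d) := lt_of_le_of_lt h1 hreal
    have h3 : (2 * Nat.card ↥((CRF n d L)ᶜ) : ℝ) < 2 ^ (n ^ d) := by
      nlinarith
    have h4 : ((2 * Nat.card ↥((CRF n d L)ᶜ) : ℕ) : ℝ) < ((2 ^ (n ^ d) : ℕ) : ℝ) := by
      push_cast
      exact h3
    exact le_of_lt (Nat.cast_lt.mp h4)
  omega
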